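/- arXiv:1808.08806 — 3 statements merged into one kernel-verified Lean document; each statement's English description precedes it below -/
import Mathlib

section
/- Let x ∈ {0,1}^n, let A ⊆ {1,…,n} be a finite set, α : A → ℝ with α_i > 0, β > 0, and suppose ∑_{h ∈ A} α_h x_h = β. Fix i ∈ A and j ∈ {1,…,n} with x_i = x_j = 1. Let y : A → ℝ satisfy 0 ≤ y_h ≤ 1 for all h ∈ A, y_h = 0 whenever x_h = 0, and ∑_{h ∈ A} α_h y_h = β x_j. Then y_i = 1. -/
theorem stmt_1 {ι : Type*} (A : Finset ι) (i j : ι)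
    (x y : ι → ℝ) (α : ι → ℝ) (β : ℝ)
    (hx : ∀ h, x h = 0 ∨ x h = 1)
    (hα : ∀ h ∈ A, 0 < α h) (hβ : 0 < β)
    (horig : ∑ h ∈ A, α h * x h = β)
    (hiA : i ∈ A) (hxi : x i = 1) (hxj : x j = 1)
    (hy0 : ∀ h ∈ A, 0 ≤ y h) (hy1 : ∀ h ∈ A, y h ≤ 1)
    (hyvanish : ∀ h ∈ A, x h = 0 → y h = 0)
    (hsum : ∑ h ∈ A, α h * y h = β * x j) :
    y i = 1 := by
  have hsum' : ∑ h ∈ A, α h * (x h - y h) = 0 := by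
    simp only [mul_sub, Finset.sum_sub_distrib, horig, hsum, hxj, mul_one, sub_self]
  have hnn : ∀ h ∈ A, 0 ≤ α h * (x h - y h) := by
    intro h hA
    apply mul_nonneg (hα h hA).le
    rcases hx h with h0 | h1
    · rw [h0, hyvanish h hA h0]; norm_num
    · rw [h1]; linarith [hy1 h hA]
  have := (Finset.sum_eq_zero_iff_of_nonneg hnn).mp hsum' i hiA
  have hαi := hα i hiA
  rw [hxi] at this
  have : 1 - y i = 0 := by
    rcases mul_eq_zero.mp this with h | h
    · exact absurd h hαi.ne'
    · exact h
  linarith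
end

section
/- Let A be a finite linearly ordered set, x : A → ℝ, and y defined on ordered pairs {(a,h) ∈ A×A : a < h} with y_{ah} ≥ 0 for all pairs. Suppose ∑_{a∈A} x_a = 2 and for every j ∈ A: ∑_{h<j} y_{hj} + ∑_{j<h} y_{jh} = x_j. Then for all i, j ∈ A with i < j, y_{ij} ≥ x_i + x_j − 1. -/
open Finset

lemma aux_pairset {ι : Type*} [LinearOrder ι] (A : Finset ι) (y : ι → ι → ℝ)
    (i : ι) (hi : i ∈ A) :
    ∑ p ∈ ((A ×ˢ A).filter (fun p => p.1 < p.2)).filter (fun p => p.1 = i ∨ p.2 = i),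
      y p.1 p.2
    = (∑ h ∈ A.filter (· < i), y h i) + (∑ h ∈ A.filter (i < ·), y i h) := by
  have hset : ((A ×ˢ A).filter (fun p => p.1 < p.2)).filter (fun p => p.1 = i ∨ p.2 = i)
      = ((A.filter (· < i)).image (fun h => (h, i))) ∪
        ((A.filter (i < ·)).image (fun h => (i, h))) := by
    ext p
    simp only [mem_filter, mem_product, mem_union, mem_image]
    constructor
    · rintro ⟨⟨⟨h1, h2⟩, hlt⟩, hor⟩
      rcases hor with h | h
      · right; exact ⟨p.2, ⟨h2, h ▸ hlt⟩, by rw [← h]⟩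
      · left; exact ⟨p.1, ⟨h1, h ▸ hlt⟩, by rw [← h]⟩
    · rintro (⟨h, ⟨hA, hlt⟩, rfl⟩ | ⟨h, ⟨hA, hlt⟩, rfl⟩)
      · exact ⟨⟨⟨hA, hi⟩, hlt⟩, Or.inr rfl⟩
      · exact ⟨⟨⟨hi, hA⟩, hlt⟩, Or.inl rfl⟩
  rw [hset, Finset.sum_union, Finset.sum_image (by intro a _ b _ h; simpa using h),
    Finset.sum_image (by intro a _ b _ h; simpa using h)]
  · rw [Finset.disjoint_left]
    intro p h1 h2
    simp only [mem_image, mem_filter] at h1 h2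
    obtain ⟨a, ⟨_, ha⟩, rfl⟩ := h1
    obtain ⟨b, ⟨_, hb⟩, h⟩ := h2
    have : i = a := congrArg Prod.fst h
    subst this
    exact lt_irrefl _ ha

theorem stmt_6 {ι : Type*} [LinearOrder ι] (A : Finset ι)
    (x : ι → ℝ) (y : ι → ι → ℝ)
    (hy0 : ∀ a ∈ A, ∀ h ∈ A, a < h → 0 ≤ y a h)
    (hsumx : ∑ a ∈ A, x a = 2)
    (heq : ∀ j ∈ A,
      (∑ h ∈ A.filter (· < j), y h j) + (∑ h ∈ A.filter (j < ·), y j h) = x j) :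
    ∀ i ∈ A, ∀ j ∈ A, i < j → y i j ≥ x i + x j - 1 := by
  intro i hi j hj hij
  set P := (A ×ˢ A).filter (fun p => p.1 < p.2) with hP
  set T := ∑ p ∈ P, y p.1 p.2 with hT
  -- T = 1
  have hTout : T = ∑ a ∈ A, ∑ h ∈ A.filter (a < ·), y a h := by
    rw [hT, hP, Finset.sum_filter, Finset.sum_product]
    simp [Finset.sum_filter]
  have hTin : T = ∑ j ∈ A, ∑ h ∈ A.filter (· < j), y h j := by
    rw [hTout]
    rw [Finset.sum_comm' (s := A) (t := fun a => A.filter (a < ·))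
      (t' := A) (s' := fun j => A.filter (· < j))]
    intro a h
    simp only [mem_filter]
    tauto
  have hT1 : T = 1 := by
    have : T + T = (2 : ℝ) := by
      rw [← hsumx]
      nth_rw 1 [hTin]
      nth_rw 1 [hTout]
      rw [← Finset.sum_add_distrib]
      exact Finset.sum_congr rfl fun j hjA => heq j hjA
    linarith
  -- sets of pairs containing i resp. j
  set Si := P.filter (fun p => p.1 = i ∨ p.2 = i) with hSi
  set Sj := P.filter (fun p => p.1 = j ∨ p.2 = j) with hSj
  have hsumi : ∑ p ∈ Si, y p.1 p.2 = x i := by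
    rw [hSi, hP, aux_pairset A y i hi]; exact heq i hi
  have hsumj : ∑ p ∈ Sj, y p.1 p.2 = x j := by
    rw [hSj, hP, aux_pairset A y j hj]; exact heq j hj
  have hinter : Si ∩ Sj = {(i, j)} := by
    ext p
    simp only [hSi, hSj, hP, mem_inter, mem_filter, mem_product, mem_singleton]
    constructor
    · rintro ⟨⟨⟨⟨h1, h2⟩, hlt⟩, hi'⟩, ⟨-, hj'⟩⟩
      rcases hi' with h | h <;> rcases hj' with h' | h'
      · exact absurd (h.symm.trans h') (ne_of_lt hij)
      · exact Prod.ext h h'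
      · exact absurd (h ▸ h' ▸ hlt) (not_lt_of_gt hij)
      · exact absurd (h'.symm.trans h) (ne_of_lt hij).symm
    · rintro rfl
      exact ⟨⟨⟨⟨hi, hj⟩, hij⟩, Or.inl rfl⟩, ⟨⟨⟨hi, hj⟩, hij⟩, Or.inr rfl⟩⟩
  have hunion_le : ∑ p ∈ Si ∪ Sj, y p.1 p.2 ≤ T := by
    apply Finset.sum_le_sum_of_subset_of_nonneg
    · exact Finset.union_subset (Finset.filter_subset _ _) (Finset.filter_subset _ _)
    · intro p hp _
      simp only [hP, mem_filter, mem_product] at hp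
      exact hy0 p.1 hp.1.1 p.2 hp.1.2 hp.2
  have key : ∑ p ∈ Si, y p.1 p.2 + ∑ p ∈ Sj, y p.1 p.2
      = ∑ p ∈ Si ∪ Sj, y p.1 p.2 + y i j := by
    rw [← Finset.sum_union_inter, hinter, Finset.sum_singleton]
  rw [hsumi, hsumj] at key
  linarith [hunion_le, hT1]
end

section
/- Let n ≥ 1 and let x : Fin n × Fin n → {0,1} satisfy the assignment constraints ∑_i x_{ip} = 1 for all p and ∑_p x_{ip} = 1 for all i. Let y : (Fin n × Fin n) × (Fin n × Fin n) → [0,1] satisfy ∑_{i} y_{(i,p),(j,q)} = x_{jq} for all p, j, q and ∑_{p} y_{(i,p),(j,q)} = x_{jq} for all i, j, q and ∑_{j} y_{(i,p),(j,q)} = x_{ip} for all i, p, q and ∑_{q} y_{(i,p),(j,q)} = x_{ip} for all i, p, j. Then y_{(i,p),(j,q)} = x_{ip} · x_{jq} for all i, p, j, q. -/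
theorem stmt_11 (n : ℕ) (hn : 1 ≤ n)
    (x : Fin n × Fin n → ℝ)
    (hx : ∀ ip, x ip = 0 ∨ x ip = 1)
    (hass1 : ∀ p : Fin n, ∑ i : Fin n, x (i, p) = 1)
    (hass2 : ∀ i : Fin n, ∑ p : Fin n, x (i, p) = 1)
    (y : (Fin n × Fin n) × (Fin n × Fin n) → ℝ)
    (hy0 : ∀ e, 0 ≤ y e) (hy1 : ∀ e, y e ≤ 1)
    (hlin1 : ∀ p j q : Fin n, ∑ i : Fin n, y ((i, p), (j, q)) = x (j, q))
    (hlin2 : ∀ i j q : Fin n, ∑ p : Fin n, y ((i, p), (j, q)) = x (j, q))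
    (hlin3 : ∀ i p q : Fin n, ∑ j : Fin n, y ((i, p), (j, q)) = x (i, p))
    (hlin4 : ∀ i p j : Fin n, ∑ q : Fin n, y ((i, p), (j, q)) = x (i, p)) :
    ∀ i p j q : Fin n, y ((i, p), (j, q)) = x (i, p) * x (j, q) := by
  -- helper: if x(i,p)=0 then y((i,p),(j,q))=0
  have hzero1 : ∀ i p j q : Fin n, x (i, p) = 0 → y ((i, p), (j, q)) = 0 := by
    intro i p j q h
    have hsum := hlin3 i p q
    rw [h] at hsum
    have := (Finset.sum_eq_zero_iff_of_nonneg (fun j' _ => hy0 ((i, p), (j', q)))).mp hsum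
    exact this j (Finset.mem_univ j)
  have hzero2 : ∀ i p j q : Fin n, x (j, q) = 0 → y ((i, p), (j, q)) = 0 := by
    intro i p j q h
    have hsum := hlin1 p j q
    rw [h] at hsum
    have := (Finset.sum_eq_zero_iff_of_nonneg (fun i' _ => hy0 ((i', p), (j, q)))).mp hsum
    exact this i (Finset.mem_univ i)
  intro i p j q
  rcases hx (i, p) with h1 | h1
  · rw [h1, zero_mul, hzero1 i p j q h1]
  rcases hx (j, q) with h2 | h2
  · rw [h2, mul_zero, hzero2 i p j q h2]
  rw [h1, h2, one_mul]
  -- x(j',q)=0 for j' ≠ j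
  have hxj : ∀ j' : Fin n, j' ≠ j → x (j', q) = 0 := by
    intro j' hne
    have hs := hass1 q
    have hrest : ∑ i' ∈ Finset.univ.erase j, x (i', q) = 0 := by
      have := Finset.add_sum_erase Finset.univ (fun i' => x (i', q)) (Finset.mem_univ j)
      rw [← this] at hs
      linarith
    have := (Finset.sum_eq_zero_iff_of_nonneg (fun i' _ => by
      rcases hx (i', q) with h | h <;> simp [h])).mp hrest
    exact this j' (Finset.mem_erase.mpr ⟨hne, Finset.mem_univ j'⟩)
  have hsum := hlin3 i p q
  rw [h1] at hsum
  have hrest : ∑ j' ∈ Finset.univ.erase j, y ((i, p), (j', q)) = 0 :=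
    Finset.sum_eq_zero (fun j' hj' =>
      hzero2 i p j' q (hxj j' (Finset.mem_erase.mp hj').1))
  have := Finset.add_sum_erase Finset.univ (fun j' => y ((i, p), (j', q))) (Finset.mem_univ j)
  rw [← this] at hsum
  linarith
end
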